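/- arXiv:2003.13100 — 2 statements merged into one kernel-verified Lean document; each statement's English description precedes it below -/
import Mathlib

section
/- Let f(x) ∈ ℤ[x] be a primitive irreducible polynomial of degree greater than one. If n, n' are positive integers with gcd(n, n') = 1, then for all integers h, h' one has S(h; n) · S(h'; n') = S(hn' + h'n; nn'). -/
open Polynomial Finset Filter
open scoped Classical

/-- `e x = e^{2πix}`. -/
noncomputable def e (x : ℝ) : ℂ := Complex.exp (2 * Real.pi * Complex.I * x)

/-- `expSum f h n = S(h;n) = ∑_{0 ≤ μ < n, f(μ) ≡ 0 (n)} e(hμ/n)`. -/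
noncomputable def expSum (f : Polynomial ℤ) (h : ℤ) (n : ℕ) : ℂ :=
  ∑ μ ∈ (Finset.range n).filter (fun μ => (n : ℤ) ∣ f.eval (μ : ℤ)),
    e (h * μ / n)

lemma e_add (x y : ℝ) : e (x + y) = e x * e y := by
  simp [e, mul_add, Complex.exp_add]

lemma e_int (k : ℤ) : e (k : ℝ) = 1 := by
  have hk := Complex.exp_int_mul_two_pi_mul_I k
  rw [e]
  rw [show ((2 : ℂ) * Real.pi * Complex.I * ((k : ℝ) : ℂ)) =
      (k : ℂ) * (2 * Real.pi * Complex.I) by push_cast; ring]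
  exact hk

lemma e_div_congr {a b : ℤ} {m : ℕ} (hm : 0 < m) (hd : (m : ℤ) ∣ a - b) :
    e ((a : ℝ) / m) = e ((b : ℝ) / m) := by
  obtain ⟨k, hk⟩ := hd
  have hm0 : (m : ℝ) ≠ 0 := Nat.cast_ne_zero.mpr hm.ne'
  have ha : (a : ℝ) = (b : ℝ) + m * k := by
    have : a = b + m * k := by linarith
    exact_mod_cast congrArg (Int.cast : ℤ → ℝ) this
  have harg : (a : ℝ) / m = (b : ℝ) / m + k := by
    rw [ha]; field_simp; try ring
  rw [harg, e_add, e_int, mul_one]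

/-- Congruent arguments give congruent polynomial values. -/
lemma eval_dvd_of_modEq (f : Polynomial ℤ) {n a b : ℕ} (hab : a ≡ b [MOD n]) :
    (n : ℤ) ∣ f.eval (a : ℤ) - f.eval (b : ℤ) :=
  ((Int.natCast_modEq_iff.mpr hab).symm.dvd).trans (Polynomial.sub_dvd_eval_sub _ _ f)

/-- `expSum` as a sum over natural numbers. -/
lemma expSum_eq_natSum (f : Polynomial ℤ) (h : ℤ) (n : ℕ) :
    expSum f h n = ∑ μ ∈ (Finset.range n).filter
      (fun μ : ℕ => (n : ℤ) ∣ f.eval (μ : ℤ)), e ((h : ℝ) * μ / n) := by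
  unfold expSum
  refine Finset.sum_nbij' (fun μ => μ.toNat) (fun μ => (μ : ℤ)) ?_ ?_ ?_ ?_ ?_
  · intro μ hμ
    simp only [Finset.mem_filter, Finset.bind_def, Finset.mem_sup, Finset.mem_range] at hμ ⊢
    obtain ⟨⟨a, ha, hmem⟩, hd⟩ := hμ
    rw [show (pure ((a:ℕ):ℤ) : Finset ℤ) = {((a:ℕ):ℤ)} from rfl, Finset.mem_singleton] at hmem
    subst hmem
    simpa using ⟨ha, hd⟩
  · intro a ha
    simp only [Finset.mem_filter, Finset.mem_range] at ha
    simp only [Finset.mem_filter, Finset.bind_def, Finset.mem_sup, Finset.mem_range]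
    exact ⟨⟨a, ha.1, Finset.mem_singleton_self _⟩, ha.2⟩
  · intro μ hμ
    simp only [Finset.mem_filter, Finset.bind_def, Finset.mem_sup, Finset.mem_range] at hμ
    obtain ⟨⟨a, _, hmem⟩, _⟩ := hμ
    rw [show (pure ((a:ℕ):ℤ) : Finset ℤ) = {((a:ℕ):ℤ)} from rfl, Finset.mem_singleton] at hmem
    subst hmem
    simp
  · intro a _; simp
  · intro μ hμ
    simp only [Finset.mem_filter, Finset.bind_def, Finset.mem_sup, Finset.mem_range] at hμ
    obtain ⟨⟨a, _, hmem⟩, _⟩ := hμ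
    rw [show (pure ((a:ℕ):ℤ) : Finset ℤ) = {((a:ℕ):ℤ)} from rfl, Finset.mem_singleton] at hmem
    subst hmem
    simp

theorem expSum_twisted_multiplicativity
    (f : Polynomial ℤ) (hfprim : f.IsPrimitive) (hfirr : Irreducible f)
    (hfdeg : 1 < f.natDegree)
    (n n' : ℕ) (hn : 0 < n) (hn' : 0 < n') (hnn' : Nat.Coprime n n')
    (h h' : ℤ) :
    expSum f h n * expSum f h' n' = expSum f (h * n' + h' * n) (n * n') := by
  rw [expSum_eq_natSum, expSum_eq_natSum, expSum_eq_natSum]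
  rw [Finset.sum_mul_sum, ← Finset.sum_product']
  have hcop : IsCoprime (n : ℤ) (n' : ℤ) := Nat.isCoprime_iff_coprime.mpr hnn'
  refine Finset.sum_nbij'
    (fun p : ℕ × ℕ => ((Nat.chineseRemainder hnn' p.1 p.2 : ℕ)))
    (fun ρ => (ρ % n, ρ % n')) ?_ ?_ ?_ ?_ ?_
  · rintro ⟨μ, ν⟩ hp
    simp only [Finset.mem_product, Finset.mem_filter, Finset.mem_range] at hp ⊢
    obtain ⟨⟨hμn, hμd⟩, ⟨hνn, hνd⟩⟩ := hp
    have hrμ : (Nat.chineseRemainder hnn' μ ν : ℕ) ≡ μ [MOD n] :=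
      (Nat.chineseRemainder hnn' μ ν).2.1
    have hrν : (Nat.chineseRemainder hnn' μ ν : ℕ) ≡ ν [MOD n'] :=
      (Nat.chineseRemainder hnn' μ ν).2.2
    refine ⟨Nat.chineseRemainder_lt_mul hnn' μ ν hn.ne' hn'.ne', ?_⟩
    have d1 : (n : ℤ) ∣ f.eval ((Nat.chineseRemainder hnn' μ ν : ℕ) : ℤ) := by
      simpa using dvd_add (eval_dvd_of_modEq f hrμ) hμd
    have d2 : (n' : ℤ) ∣ f.eval ((Nat.chineseRemainder hnn' μ ν : ℕ) : ℤ) := by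
      simpa using dvd_add (eval_dvd_of_modEq f hrν) hνd
    exact_mod_cast hcop.mul_dvd d1 d2
  · intro ρ hρ
    simp only [Finset.mem_filter, Finset.mem_range] at hρ
    obtain ⟨hρlt, hρd⟩ := hρ
    simp only [Finset.mem_product, Finset.mem_filter, Finset.mem_range]
    have hdn : (n : ℤ) ∣ f.eval (ρ : ℤ) := by
      refine dvd_trans ?_ (by exact_mod_cast hρd)
      exact_mod_cast (Dvd.intro n' rfl : (n : ℤ) ∣ (n : ℤ) * n')
    have hdn' : (n' : ℤ) ∣ f.eval (ρ : ℤ) := by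
      refine dvd_trans ?_ (by exact_mod_cast hρd)
      exact_mod_cast (Dvd.intro_left n rfl : (n' : ℤ) ∣ (n : ℤ) * n')
    refine ⟨⟨Nat.mod_lt _ hn, ?_⟩, ⟨Nat.mod_lt _ hn', ?_⟩⟩
    · simpa using dvd_add (eval_dvd_of_modEq f (Nat.mod_modEq ρ n)) hdn
    · simpa using dvd_add (eval_dvd_of_modEq f (Nat.mod_modEq ρ n')) hdn'
  · rintro ⟨μ, ν⟩ hp
    simp only [Finset.mem_product, Finset.mem_filter, Finset.mem_range] at hp
    obtain ⟨⟨hμn, _⟩, ⟨hνn, _⟩⟩ := hp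
    have h1 : (Nat.chineseRemainder hnn' μ ν : ℕ) % n = μ := by
      have := (Nat.chineseRemainder hnn' μ ν).2.1
      unfold Nat.ModEq at this
      rw [this, Nat.mod_eq_of_lt hμn]
    have h2 : (Nat.chineseRemainder hnn' μ ν : ℕ) % n' = ν := by
      have := (Nat.chineseRemainder hnn' μ ν).2.2
      unfold Nat.ModEq at this
      rw [this, Nat.mod_eq_of_lt hνn]
    simp [h1, h2]
  · intro ρ hρ
    simp only [Finset.mem_filter, Finset.mem_range] at hρ
    obtain ⟨hρlt, _⟩ := hρ
    have huniq : ρ ≡ (Nat.chineseRemainder hnn' (ρ % n) (ρ % n') : ℕ) [MOD n * n'] :=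
      Nat.chineseRemainder_modEq_unique hnn' (Nat.mod_modEq ρ n).symm (Nat.mod_modEq ρ n').symm
    have hlt : (Nat.chineseRemainder hnn' (ρ % n) (ρ % n') : ℕ) < n * n' :=
      Nat.chineseRemainder_lt_mul hnn' _ _ hn.ne' hn'.ne'
    unfold Nat.ModEq at huniq
    rw [Nat.mod_eq_of_lt hρlt, Nat.mod_eq_of_lt hlt] at huniq
    exact huniq.symm
  · rintro ⟨μ, ν⟩ hp
    simp only [Finset.mem_product, Finset.mem_filter, Finset.mem_range] at hp
    obtain ⟨⟨hμn, _⟩, ⟨hνn, _⟩⟩ := hp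
    set r : ℕ := (Nat.chineseRemainder hnn' μ ν : ℕ) with hrdef
    have hrμ : r ≡ μ [MOD n] := (Nat.chineseRemainder hnn' μ ν).2.1
    have hrν : r ≡ ν [MOD n'] := (Nat.chineseRemainder hnn' μ ν).2.2
    have hn0 : (n : ℝ) ≠ 0 := Nat.cast_ne_zero.mpr hn.ne'
    have hn'0 : (n' : ℝ) ≠ 0 := Nat.cast_ne_zero.mpr hn'.ne'
    have step1 : e ((h : ℝ) * μ / n) * e ((h' : ℝ) * ν / n')
        = e (((h * μ * n' + h' * ν * n : ℤ) : ℝ) / ((n * n' : ℕ) : ℝ)) := by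
      rw [← e_add]
      congr 1
      push_cast
      field_simp
      try ring
    rw [step1]
    obtain ⟨c1, e1⟩ : (n : ℤ) ∣ (r : ℤ) - μ := (Int.natCast_modEq_iff.mpr hrμ).symm.dvd
    obtain ⟨c2, e2⟩ : (n' : ℤ) ∣ (r : ℤ) - ν := (Int.natCast_modEq_iff.mpr hrν).symm.dvd
    have hdvd : ((n * n' : ℕ) : ℤ) ∣ (h * μ * n' + h' * ν * n) - (h * n' + h' * n) * r := by
      refine ⟨-(h * c1 + h' * c2), ?_⟩
      push_cast
      linear_combination (-(h : ℤ) * n') * e1 + (-(h' : ℤ) * n) * e2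
    rw [e_div_congr (Nat.mul_pos hn hn') hdvd]
    congr 1
    push_cast
    ring
end

section
/- Let f(x), g(x) ∈ ℤ[x] be primitive irreducible polynomials of degree greater than one. Then there exist constants a ≥ 0 and b ≥ 1 such that for all real numbers 2 ≤ y ≤ x, Σ_{y < p ≤ x} r(p)s(p)·(log p)/p ≤ a·log(x/y) + b, where the sum is over primes p with y < p ≤ x. -/
open Polynomial Finset Filter
open scoped Classical

/-- `rootCount f n` is the number of residues `μ` with `0 ≤ μ < n` and `f(μ) ≡ 0 (mod n)`. -/
noncomputable def rootCount (f : Polynomial ℤ) (n : ℕ) : ℕ :=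
  ((Finset.range n).filter (fun μ => (n : ℤ) ∣ f.eval (μ : ℤ))).card

lemma rootCount_eq (f : Polynomial ℤ) (n : ℕ) :
    rootCount f n = ((Finset.range n).filter (fun μ : ℕ => (n : ℤ) ∣ f.eval ((μ : ℕ) : ℤ))).card := by
  rw [rootCount]
  rw [show (do let a ← Finset.range n; pure ((a : ℕ) : ℤ) : Finset ℤ) = (Finset.range n).image (fun a : ℕ => (a : ℤ)) from by
    ext z; simp [Finset.bind_def, Finset.pure_def, Finset.mem_biUnion, eq_comm]]
  rw [Finset.filter_image]
  rw [Finset.card_image_of_injective _ (fun a b => by exact_mod_cast id)]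

lemma rootCount_le (f : Polynomial ℤ) (hf : f.IsPrimitive)
    {p : ℕ} (hp : p.Prime) : rootCount f p ≤ f.natDegree := by
  haveI : Fact p.Prime := ⟨hp⟩
  set F : Polynomial (ZMod p) := f.map (Int.castRingHom (ZMod p)) with hF
  have hF0 : F ≠ 0 := by
    intro h
    have hdvd : Polynomial.C (p : ℤ) ∣ f := by
      rw [Polynomial.C_dvd_iff_dvd_coeff]
      intro n
      have := congrArg (fun q => Polynomial.coeff q n) h
      simp only [hF, Polynomial.coeff_map, Polynomial.coeff_zero] at this
      exact_mod_cast (ZMod.intCast_zmod_eq_zero_iff_dvd _ p).mp this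
    have := Int.isUnit_iff.mp (hf _ hdvd)
    have h2 := hp.one_lt
    omega
  have key : rootCount f p ≤ F.roots.toFinset.card := by
    rw [rootCount_eq]
    apply Finset.card_le_card_of_injOn (fun μ : ℕ => (μ : ZMod p))
    · intro μ hμ
      simp only [Finset.mem_coe, Finset.mem_filter, Finset.mem_range] at hμ
      simp only [Finset.mem_coe, Multiset.mem_toFinset, Polynomial.mem_roots hF0]
      rw [hF, Polynomial.IsRoot, Polynomial.eval_map, Polynomial.eval₂_at_natCast]
      exact_mod_cast (ZMod.intCast_zmod_eq_zero_iff_dvd _ p).mpr hμ.2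
    · intro a ha b hb hab
      simp only [Finset.coe_filter, Set.mem_setOf_eq, Finset.mem_range] at ha hb
      have h1 := ZMod.val_cast_of_lt ha.1
      have h2 := ZMod.val_cast_of_lt hb.1
      have := congrArg ZMod.val hab
      simpa [h1, h2] using this
  calc rootCount f p ≤ F.roots.toFinset.card := key
    _ ≤ Multiset.card F.roots := Multiset.toFinset_card_le _
    _ ≤ F.natDegree := F.card_roots'
    _ ≤ f.natDegree := Polynomial.natDegree_map_le

lemma theta_le (N : ℕ) : ∑ p ∈ (Finset.range N).filter Nat.Prime, Real.log p ≤ N * Real.log 4 := by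
  have hlog4 : (0:ℝ) ≤ Real.log 4 := Real.log_nonneg (by norm_num)
  rcases N with _ | n
  · simp
  · have h1 : ∑ p ∈ (Finset.range (n+1)).filter Nat.Prime, Real.log p
        = Real.log (primorial n) := by
      rw [primorial, Nat.cast_prod, Real.log_prod]
      intro p hp
      simp only [Finset.mem_filter, Finset.mem_range] at hp
      exact_mod_cast hp.2.pos.ne'
    rw [h1]
    calc Real.log (primorial n) ≤ Real.log ((4:ℕ)^n) := by
          apply Real.log_le_log (by exact_mod_cast primorial_pos n)
          exact_mod_cast primorial_le_4_pow n
      _ = n * Real.log 4 := by push_cast; rw [Real.log_pow]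
      _ ≤ (n+1 : ℕ) * Real.log 4 := by push_cast; nlinarith

lemma fiber_le (k : ℕ) (P : Finset ℕ) (hP : ∀ p ∈ P, p.Prime) :
    ∑ p ∈ P.filter (fun p => Nat.log 2 p = k), Real.log p / p ≤ 2 * Real.log 4 := by
  have h2k : (0:ℝ) < 2^k := by positivity
  calc ∑ p ∈ P.filter (fun p => Nat.log 2 p = k), Real.log p / p
      ≤ ∑ p ∈ P.filter (fun p => Nat.log 2 p = k), Real.log p / 2^k := by
        apply Finset.sum_le_sum
        intro p hp
        simp only [Finset.mem_filter] at hp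
        have hprime := hP p hp.1
        have hlow : (2:ℕ)^k ≤ p := hp.2 ▸ Nat.pow_log_le_self 2 hprime.pos.ne'
        have hlogp : (0:ℝ) ≤ Real.log p := Real.log_nonneg (by exact_mod_cast hprime.one_lt.le)
        apply div_le_div_of_nonneg_left hlogp h2k
        exact_mod_cast hlow
    _ = (∑ p ∈ P.filter (fun p => Nat.log 2 p = k), Real.log p) / 2^k := by
        rw [Finset.sum_div]
    _ ≤ ((2^(k+1) : ℕ) * Real.log 4) / 2^k := by
        gcongr ?_ / _
        calc ∑ p ∈ P.filter (fun p => Nat.log 2 p = k), Real.log p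
            ≤ ∑ p ∈ (Finset.range (2^(k+1))).filter Nat.Prime, Real.log p := by
              apply Finset.sum_le_sum_of_subset_of_nonneg
              · intro p hp
                simp only [Finset.mem_filter, Finset.mem_range] at hp ⊢
                refine ⟨?_, hP p hp.1⟩
                rw [← hp.2]
                exact Nat.lt_pow_succ_log_self (by norm_num) p
              · intro p hp _
                simp only [Finset.mem_filter, Finset.mem_range] at hp
                exact Real.log_nonneg (by exact_mod_cast hp.2.one_lt.le)
          _ ≤ (2^(k+1) : ℕ) * Real.log 4 := theta_le _
    _ = 2 * Real.log 4 := by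
        push_cast
        rw [pow_succ]
        field_simp

lemma sum_logdiv_le (x y : ℝ) (hy : 2 ≤ y) (hyx : y ≤ x) :
    ∑ p ∈ (Finset.Icc 1 ⌊x⌋₊).filter (fun p : ℕ => p.Prime ∧ y < (p : ℝ)), Real.log p / p
      ≤ (2 * Real.log 4) * (Real.log (x / y) / Real.log 2 + 2) := by
  have hx2 : (2:ℝ) ≤ x := hy.trans hyx
  have hy0 : (0:ℝ) < y := by linarith
  have hlog2 : (0:ℝ) < Real.log 2 := Real.log_pos (by norm_num)
  have hlog4 : (0:ℝ) ≤ Real.log 4 := Real.log_nonneg (by norm_num)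
  have hxy1 : (1:ℝ) ≤ x / y := (one_le_div hy0).mpr hyx
  have hlogxy : (0:ℝ) ≤ Real.log (x / y) := Real.log_nonneg hxy1
  set P := (Finset.Icc 1 ⌊x⌋₊).filter (fun p : ℕ => p.Prime ∧ y < (p : ℝ)) with hP
  have hPprime : ∀ p ∈ P, p.Prime := by
    intro p hp; simp only [hP, Finset.mem_filter] at hp; exact hp.2.1
  set kmin := Nat.log 2 ⌊y⌋₊ with hkmin
  set kmax := Nat.log 2 ⌊x⌋₊ with hkmax
  have hmap : ∀ p ∈ P, Nat.log 2 p ∈ Finset.Icc kmin kmax := by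
    intro p hp
    simp only [hP, Finset.mem_filter, Finset.mem_Icc] at hp
    simp only [Finset.mem_Icc]
    constructor
    · apply Nat.log_mono_right
      have : (⌊y⌋₊ : ℝ) ≤ y := Nat.floor_le hy0.le
      have : (⌊y⌋₊ : ℝ) < p := lt_of_le_of_lt this hp.2.2
      exact_mod_cast this.le
    · exact Nat.log_mono_right hp.1.2
  rw [← Finset.sum_fiberwise_of_maps_to hmap (fun p => Real.log p / p)]
  calc ∑ k ∈ Finset.Icc kmin kmax, ∑ p ∈ P.filter (fun p => Nat.log 2 p = k), Real.log p / p
      ≤ ∑ k ∈ Finset.Icc kmin kmax, 2 * Real.log 4 :=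
        Finset.sum_le_sum (fun k _ => fiber_le k P hPprime)
    _ = (Finset.Icc kmin kmax).card * (2 * Real.log 4) := by rw [Finset.sum_const, nsmul_eq_mul]
    _ ≤ (Real.log (x / y) / Real.log 2 + 2) * (2 * Real.log 4) := by
        apply mul_le_mul_of_nonneg_right ?_ (by positivity)
        rw [Nat.card_Icc]
        rcases le_or_gt kmin kmax with h | h
        · have hfx : (2:ℕ) ≤ ⌊x⌋₊ := Nat.le_floor (by exact_mod_cast hx2)
          have h1 : ((2:ℝ))^kmax ≤ x := by
            have h1n : (2:ℕ)^kmax ≤ ⌊x⌋₊ := Nat.pow_log_le_self 2 (by omega)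
            calc ((2:ℝ))^kmax = ((2^kmax : ℕ) : ℝ) := by push_cast; ring
              _ ≤ (⌊x⌋₊ : ℝ) := by exact_mod_cast h1n
              _ ≤ x := Nat.floor_le (by linarith)
          have h2 : y < (2:ℝ)^(kmin+1) := by
            have h2n : ⌊y⌋₊ < 2^(kmin+1) := Nat.lt_pow_succ_log_self (by norm_num) _
            have : y < (⌊y⌋₊ : ℝ) + 1 := Nat.lt_floor_add_one y
            calc y < (⌊y⌋₊ : ℝ) + 1 := this
              _ ≤ ((2^(kmin+1) : ℕ) : ℝ) := by exact_mod_cast h2n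
              _ = (2:ℝ)^(kmin+1) := by push_cast; ring
          have hpow : (2:ℝ)^(kmax - kmin) ≤ 2 * x / y := by
            have hkd : (2:ℝ)^(kmax - kmin) = 2^kmax / 2^kmin := by
              rw [pow_sub₀ (2:ℝ) (by norm_num) h, div_eq_mul_inv]
            rw [hkd]
            rw [div_le_div_iff₀ (by positivity) hy0]
            have h2' : y / 2 < 2^kmin := by
              rw [pow_succ] at h2; linarith
            nlinarith [pow_pos (show (0:ℝ) < 2 by norm_num) kmin, pow_pos (show (0:ℝ) < 2 by norm_num) kmax]
          have hlogpow : ((kmax - kmin : ℕ) : ℝ) * Real.log 2 ≤ Real.log 2 + Real.log (x / y) := by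
            have := Real.log_le_log (by positivity) hpow
            rw [Real.log_pow] at this
            rw [show (2:ℝ) * x / y = 2 * (x / y) by ring, Real.log_mul (by norm_num) (by positivity)] at this
            exact this
          have hcast : ((kmax + 1 - kmin : ℕ) : ℝ) = ((kmax - kmin : ℕ) : ℝ) + 1 := by
            have : kmax + 1 - kmin = (kmax - kmin) + 1 := by omega
            rw [this]; push_cast; ring
          rw [hcast]
          have : ((kmax - kmin : ℕ) : ℝ) ≤ Real.log (x / y) / Real.log 2 + 1 := by
            rw [div_add' _ _ _ hlog2.ne', le_div_iff₀ hlog2]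
            linarith
          linarith
        · have : kmax + 1 - kmin = 0 := by omega
          rw [this]
          simp only [Nat.cast_zero]
          positivity
    _ = (2 * Real.log 4) * (Real.log (x / y) / Real.log 2 + 2) := by ring

theorem mertens_type_upper_bound
    (f g : Polynomial ℤ) (hfprim : f.IsPrimitive) (hgprim : g.IsPrimitive)
    (hfirr : Irreducible f) (hgirr : Irreducible g)
    (hfdeg : 1 < f.natDegree) (hgdeg : 1 < g.natDegree) :
    ∃ a b : ℝ, 0 ≤ a ∧ 1 ≤ b ∧ ∀ x y : ℝ, 2 ≤ y → y ≤ x →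
      ∑ p ∈ (Finset.Icc 1 ⌊x⌋₊).filter (fun p : ℕ => p.Prime ∧ y < (p : ℝ)),
          (rootCount f p * rootCount g p : ℝ) * Real.log p / p ≤
        a * Real.log (x / y) + b := by
  have hlog2 : (0:ℝ) < Real.log 2 := Real.log_pos (by norm_num)
  have hlog4 : (0:ℝ) ≤ Real.log 4 := Real.log_nonneg (by norm_num)
  set D : ℝ := ((f.natDegree * g.natDegree : ℕ) : ℝ) with hD
  have hD0 : 0 ≤ D := by positivity
  refine ⟨D * (2 * Real.log 4) / Real.log 2, max 1 (D * (2 * Real.log 4) * 2),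
    by positivity, le_max_left _ _, ?_⟩
  intro x y hy hyx
  have hlogxy : (0:ℝ) ≤ Real.log (x / y) :=
    Real.log_nonneg ((one_le_div (by linarith)).mpr hyx)
  calc ∑ p ∈ (Finset.Icc 1 ⌊x⌋₊).filter (fun p : ℕ => p.Prime ∧ y < (p : ℝ)),
          (rootCount f p * rootCount g p : ℝ) * Real.log p / p
      ≤ ∑ p ∈ (Finset.Icc 1 ⌊x⌋₊).filter (fun p : ℕ => p.Prime ∧ y < (p : ℝ)),
          D * (Real.log p / p) := by
        apply Finset.sum_le_sum
        intro p hp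
        simp only [Finset.mem_filter, Finset.mem_Icc] at hp
        have hprime := hp.2.1
        have hrs : (rootCount f p * rootCount g p : ℕ) ≤ f.natDegree * g.natDegree :=
          Nat.mul_le_mul (rootCount_le f hfprim hprime) (rootCount_le g hgprim hprime)
        have hterm : (0:ℝ) ≤ Real.log p / p := by
          apply div_nonneg (Real.log_nonneg (by exact_mod_cast hprime.one_lt.le))
          positivity
        rw [mul_div_assoc]
        apply mul_le_mul_of_nonneg_right ?_ hterm
        rw [hD]
        exact_mod_cast hrs
    _ = D * ∑ p ∈ (Finset.Icc 1 ⌊x⌋₊).filter (fun p : ℕ => p.Prime ∧ y < (p : ℝ)),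
          Real.log p / p := by rw [Finset.mul_sum]
    _ ≤ D * ((2 * Real.log 4) * (Real.log (x / y) / Real.log 2 + 2)) :=
        mul_le_mul_of_nonneg_left (sum_logdiv_le x y hy hyx) hD0
    _ = D * (2 * Real.log 4) / Real.log 2 * Real.log (x / y) + D * (2 * Real.log 4) * 2 := by
        field_simp
    _ ≤ D * (2 * Real.log 4) / Real.log 2 * Real.log (x / y)
          + max 1 (D * (2 * Real.log 4) * 2) := by
        have := le_max_right (1:ℝ) (D * (2 * Real.log 4) * 2)
        linarith
end
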